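/- arXiv:1101.4278 — 6 statements merged into one kernel-verified Lean document; each statement's English description precedes it below -/
import Mathlib

section
/- In the ring ℚ[[x]] of formal power series over the rationals, the power series F(x) = ∑_{i≥1} (-1)^{i-1} · 2((i-1)!)²/(2i)! · x^i is the compositional inverse of the power series H(x) = ∑_{j≥1} 2/(2j)! · x^j; that is, F(H(x)) = x and H(F(x)) = x. -/
/-!
Put `x = t²`. Then `h(t) = H(t²) = 2 cosh t - 2` solves `h'' = h + 2` and `f(t) = F(t²)` is
`(2 arsinh (t / 2))²`, so everything follows from differential equations, rewritten in `x`: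
`4xH'' + 2H' = H + 2`, its first integral `4xH'² = H(H + 4)` (that is, `h'² = h² + 4h`), and
`x(x + 4)F'' + (x + 2)F' = 2`, which is checked coefficientwise. By the chain rule
`W = F ∘ H` satisfies `4xW'' + 2W' = 2`, i.e. `w(t) = W(t²)` has `w'' = 2`; with `W(0) = 0`
this forces `W = x`. Since `H'(0) = 1`, `H` has a two-sided compositional inverse, so the left
inverse `F` is also a right inverse.
-/

open PowerSeries

/-- Composition `F(H(x))` of formal power series, valid when `H` has zero constant
coefficient: the `n`-th coefficient is computed from truncations of degree `n`. -/
noncomputable def PowerSeries.compose (F H : PowerSeries ℚ) : PowerSeries ℚ :=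
  PowerSeries.mk fun n =>
    Polynomial.coeff ((PowerSeries.trunc (n + 1) F).comp (PowerSeries.trunc (n + 1) H)) n

/-- `F(x) = ∑_{i≥1} (-1)^{i-1} · 2((i-1)!)²/(2i)! · xⁱ`. -/
noncomputable def Fseries : PowerSeries ℚ :=
  PowerSeries.mk fun i =>
    if i = 0 then 0
    else (-1 : ℚ) ^ (i - 1) * (2 * ((i - 1).factorial : ℚ) ^ 2 / ((2 * i).factorial : ℚ))

/-- `H(x) = ∑_{j≥1} 2/(2j)! · xʲ`. -/
noncomputable def Hseries : PowerSeries ℚ :=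
  PowerSeries.mk fun j => if j = 0 then 0 else 2 / ((2 * j).factorial : ℚ)

namespace PowerSeries

section CommSemiring

variable {R : Type*} [CommSemiring R]

theorem coeff_X_mul_derivative (f : R⟦X⟧) (n : ℕ) :
    coeff n (X * d⁄dX R f) = n * coeff n f := by
  cases n with
  | zero => simp
  | succ n => rw [coeff_succ_X_mul, coeff_derivative, mul_comm, Nat.cast_succ]

theorem derivative_X_mul (f : R⟦X⟧) : d⁄dX R (X * f) = f + X * d⁄dX R f := by
  rw [Derivation.leibniz, derivative_X, smul_eq_mul, smul_eq_mul, mul_one, add_comm]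

/-- If `h(t) = g(t²)`, then `h''(t) = (evenSecondDeriv g)(t²)`. -/
noncomputable def evenSecondDeriv (g : R⟦X⟧) : R⟦X⟧ :=
  4 * X * d⁄dX R (d⁄dX R g) + 2 * d⁄dX R g

theorem coeff_evenSecondDeriv (g : R⟦X⟧) (n : ℕ) :
    coeff n (evenSecondDeriv g) = (2 * n + 2) * (2 * n + 1) * coeff (n + 1) g := by
  rw [evenSecondDeriv, mul_assoc, ← map_ofNat C, ← map_ofNat C 2, map_add, coeff_C_mul,
    coeff_C_mul, coeff_X_mul_derivative, coeff_derivative]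
  ring

end CommSemiring

section CommRing

variable {R : Type*} [CommRing R]

theorem coeff_eq_of_X_pow_dvd_sub {f g : R⟦X⟧} {m n : ℕ} (hmn : m < n) (h : X ^ n ∣ f - g) :
    coeff m f = coeff m g :=
  sub_eq_zero.mp (by rw [← map_sub]; exact X_pow_dvd_iff.mp h m hmn)

theorem X_pow_dvd_sub_trunc (n : ℕ) (f : R⟦X⟧) : X ^ n ∣ f - (trunc n f : R⟦X⟧) :=
  X_pow_dvd_iff.mpr fun m hm => by simp [coeff_trunc, hm]

theorem X_pow_dvd_subst_sub {a : R⟦X⟧} (ha : constantCoeff a = 0) {f g : R⟦X⟧} {n : ℕ}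
    (h : X ^ n ∣ f - g) : X ^ n ∣ f.subst a - g.subst a := by
  have hsub := HasSubst.of_constantCoeff_zero' ha
  obtain ⟨k, hk⟩ := h
  rw [← subst_sub hsub, hk, subst_mul hsub, subst_pow hsub, subst_X hsub]
  exact dvd_mul_of_dvd_left (pow_dvd_pow_of_dvd (X_dvd_iff.mpr ha) n) _

theorem four_X_mul_derivative_sq [IsAddTorsionFree R] {g : R⟦X⟧} (hg0 : constantCoeff g = 0)
    (hg : evenSecondDeriv g = g + 2) : 4 * X * d⁄dX R g ^ 2 = g * (g + 4) := by
  unfold evenSecondDeriv at hg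
  refine derivative.ext ?_ (by simp [hg0])
  have h4 : d⁄dX R (4 : R⟦X⟧) = 0 := by simpa using (d⁄dX R).map_natCast 4
  simp only [Derivation.leibniz, Derivation.leibniz_pow, derivative_X, smul_eq_mul, map_add,
    h4]
  linear_combination (2 * d⁄dX R g) * hg

theorem evenSecondDeriv_subst [IsAddTorsionFree R] {F H : R⟦X⟧} (hH0 : constantCoeff H = 0)
    (hH : evenSecondDeriv H = H + 2)
    (hF : X * (X + 4) * d⁄dX R (d⁄dX R F) + (X + 2) * d⁄dX R F = 2) :
    evenSecondDeriv (F.subst H) = 2 := by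
  have hsub := HasSubst.of_constantCoeff_zero' hH0
  have hFH :
      H * (H + 4) * (d⁄dX R (d⁄dX R F)).subst H + (H + 2) * (d⁄dX R F).subst H = 2 := by
    simpa [← coe_substAlgHom hsub, substAlgHom_X, map_ofNat] using
      congrArg (substAlgHom hsub) hF
  have hH' := four_X_mul_derivative_sq hH0 hH
  unfold evenSecondDeriv at hH ⊢
  rw [derivative_subst hsub, Derivation.leibniz, derivative_subst hsub, smul_eq_mul, smul_eq_mul]
  linear_combination (d⁄dX R (d⁄dX R F)).subst H * hH' + (d⁄dX R F).subst H * hH + hFH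

theorem subst_eq_X_of_subst_eq_X {f g : R⟦X⟧} (hg0 : constantCoeff g = 0)
    (hg1 : IsUnit (coeff 1 g)) (h : f.subst g = X) : g.subst f = X := by
  have hg := HasSubst.of_constantCoeff_zero' hg0
  have hQ := HasSubst.substInvOfIsUnit g hg1
  have hinv := subst_substInvOfIsUnit_right g hg0 hg1
  -- `f = f ∘ (g ∘ g⁻¹) = (f ∘ g) ∘ g⁻¹ = g⁻¹`
  have hf : f = g.substInvOfIsUnit hg1 := by
    have hassoc := subst_comp_subst_apply (R := R) hg hQ f
    rw [h, hinv, X_subst, subst_X hQ] at hassoc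
    exact hassoc.symm
  rw [hf, hinv]

end CommRing

theorem eq_X_of_evenSecondDeriv_eq_two {K : Type*} [Field K] [CharZero K] {W : K⟦X⟧}
    (hW0 : constantCoeff W = 0) (hW : evenSecondDeriv W = 2) : W = X := by
  ext n
  rcases n with _ | n
  · simpa using hW0
  · have hn := congrArg (coeff n) hW
    rw [coeff_evenSecondDeriv, ← map_ofNat C, coeff_C] at hn
    have hpos : (2 * n + 2 : K) * (2 * n + 1) ≠ 0 := by norm_cast
    rw [coeff_X, ← mul_right_inj' hpos, hn]
    rcases n with _ | n <;> simp

theorem compose_eq_subst {F H : ℚ⟦X⟧} (hH : constantCoeff H = 0) :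
    F.compose H = F.subst H := by
  ext n
  set P := trunc (n + 1) F
  have hcomp : ((P.comp (trunc (n + 1) H) : Polynomial ℚ) : ℚ⟦X⟧)
      = Polynomial.aeval (trunc (n + 1) H : ℚ⟦X⟧) P := by
    simpa [Polynomial.coeToPowerSeries.algHom_apply, Polynomial.comp_eq_aeval] using
      (Polynomial.aeval_algHom_apply (Polynomial.coeToPowerSeries.algHom ℚ) _ P).symm
  calc coeff n (F.compose H)
      = coeff n (Polynomial.aeval (trunc (n + 1) H : ℚ⟦X⟧) P) := by
        rw [compose, coeff_mk, ← Polynomial.coeff_coe, hcomp]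
    _ = coeff n (Polynomial.aeval H P) := by
        refine coeff_eq_of_X_pow_dvd_sub n.lt_succ_self ?_
        simp only [Polynomial.aeval_def, Polynomial.eval₂_eq_eval_map]
        exact dvd_sub_comm.mp ((X_pow_dvd_sub_trunc _ H).trans (Polynomial.sub_dvd_eval_sub _ _ _))
    _ = coeff n (F.subst H) := by
        rw [← subst_coe (HasSubst.of_constantCoeff_zero' hH)]
        exact coeff_eq_of_X_pow_dvd_sub n.lt_succ_self
          (dvd_sub_comm.mp (X_pow_dvd_subst_sub hH (X_pow_dvd_sub_trunc _ F)))

end PowerSeries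

theorem constantCoeff_Hseries : constantCoeff Hseries = 0 := by
  simp [Hseries]

theorem coeff_Hseries_succ (n : ℕ) :
    coeff (n + 1) Hseries = 2 / ((2 * n + 2).factorial : ℚ) := by
  simp [Hseries, mul_add]

theorem constantCoeff_Fseries : constantCoeff Fseries = 0 := by
  simp [Fseries]

theorem coeff_Fseries_succ (n : ℕ) : coeff (n + 1) Fseries =
    (-1) ^ n * (2 * (n.factorial : ℚ) ^ 2 / ((2 * n + 2).factorial : ℚ)) := by
  simp [Fseries, mul_add]

theorem Nat.cast_factorial_two_mul_add_two {R : Type*} [CommSemiring R] (n : ℕ) :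
    ((2 * n + 2).factorial : R) = (2 * n + 2) * (2 * n + 1) * (2 * n).factorial := by
  rw [Nat.factorial_succ, Nat.factorial_succ]
  push_cast
  ring

theorem evenSecondDeriv_Hseries : evenSecondDeriv Hseries = Hseries + 2 := by
  ext n
  rw [coeff_evenSecondDeriv, coeff_Hseries_succ, map_add, ← map_ofNat C, coeff_C]
  rcases n with _ | n
  · simp [constantCoeff_Hseries]
  · rw [coeff_Hseries_succ, if_neg n.succ_ne_zero, Nat.cast_factorial_two_mul_add_two (n + 1),
      show 2 * (n + 1) = 2 * n + 2 by ring]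
    field_simp
    ring

theorem Fseries_ode :
    X * (X + 4) * d⁄dX ℚ (d⁄dX ℚ Fseries) + (X + 2) * d⁄dX ℚ Fseries = 2 := by
  have h : X * d⁄dX ℚ (X * d⁄dX ℚ Fseries) + evenSecondDeriv Fseries = 2 := by
    ext n
    rw [map_add, coeff_X_mul_derivative, coeff_X_mul_derivative, coeff_evenSecondDeriv,
      coeff_Fseries_succ, ← map_ofNat C, coeff_C]
    rcases n with _ | n
    · simp
    · rw [coeff_Fseries_succ, if_neg n.succ_ne_zero, Nat.cast_factorial_two_mul_add_two (n + 1),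
        show 2 * (n + 1) = 2 * n + 2 by ring, Nat.factorial_succ n, pow_succ]
      push_cast
      field_simp
      ring
  rw [derivative_X_mul, evenSecondDeriv] at h
  linear_combination h

theorem coeff_one_Hseries : coeff 1 Hseries = 1 := by
  rw [coeff_Hseries_succ]
  norm_num

theorem Fseries_subst_Hseries : Fseries.subst Hseries = X :=
  eq_X_of_evenSecondDeriv_eq_two
    (constantCoeff_subst_eq_zero constantCoeff_Hseries _ constantCoeff_Fseries)
    (evenSecondDeriv_subst constantCoeff_Hseries evenSecondDeriv_Hseries Fseries_ode)

theorem Fseries_comp_inverse_Hseries :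
    Fseries.compose Hseries = PowerSeries.X ∧ Hseries.compose Fseries = PowerSeries.X := by
  rw [compose_eq_subst constantCoeff_Hseries, compose_eq_subst constantCoeff_Fseries]
  refine ⟨Fseries_subst_Hseries, ?_⟩
  exact subst_eq_X_of_subst_eq_X constantCoeff_Hseries (by simp [coeff_one_Hseries])
    Fseries_subst_Hseries
end

section
/- The formal power series F(x) = ∑_{i≥1} (-1)^{i-1} · 2((i-1)!)²/(2i)! · x^i over ℚ satisfies the differential equation x(x+4)F''(x) + (x+2)F'(x) − 2 = 0, where F' and F'' denote formal derivatives. -/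
open PowerSeries

/-! Comparing coefficients of `xⁿ`, the operator `x(x+4)f'' + (x+2)f'` sends `∑ aₙ xⁿ` to
`∑ (n² aₙ + 2(n+1)(2n+1) aₙ₊₁) xⁿ`, so the equation says `a₁ = 1` and
`n² aₙ + 2(n+1)(2n+1) aₙ₊₁ = 0` for `n ≥ 1`. The latter is the ratio
`aₙ₊₁ / aₙ = -n² / ((2n+1)(2n+2))` of consecutive terms `(-1)ⁿ⁻¹ 2((n-1)!)² / (2n)!`. -/

theorem PowerSeries.coeff_X_mul_X_add_four_mul_derivative_derivative_add {R : Type*}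
    [CommSemiring R] (f : R⟦X⟧) (n : ℕ) :
    coeff n (X * (X + 4) * d⁄dX R (d⁄dX R f) + (X + 2) * d⁄dX R f) =
      n ^ 2 * coeff n f + 2 * (n + 1) * (2 * n + 1) * coeff (n + 1) f := by
  have h : X * (X + 4) * d⁄dX R (d⁄dX R f) + (X + 2) * d⁄dX R f =
      X * (X * d⁄dX R (d⁄dX R f) + d⁄dX R f) + C 4 * (X * d⁄dX R (d⁄dX R f)) + C 2 * d⁄dX R f := by
    simp only [map_ofNat]
    ring
  rcases n with _ | _ | n <;>
    simp only [h, map_add, coeff_C_mul, coeff_zero_X_mul, coeff_succ_X_mul, coeff_derivative] <;>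
    push_cast <;> ring

theorem coeff_succ_Fseries (m : ℕ) :
    coeff (m + 1) Fseries = (-1) ^ m * (2 * (m.factorial : ℚ) ^ 2 / (2 * (m + 1)).factorial) := by
  simp [Fseries]

theorem coeff_Fseries_ratio (m : ℕ) :
    2 * (m + 2) * (2 * m + 3) * coeff (m + 2) Fseries = -(m + 1) ^ 2 * coeff (m + 1) Fseries := by
  rw [coeff_succ_Fseries, coeff_succ_Fseries, show 2 * (m + 1 + 1) = 2 * (m + 1) + 1 + 1 by ring]
  have : ((2 * (m + 1)).factorial : ℚ) ≠ 0 := by positivity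
  simp only [Nat.factorial_succ, pow_succ]
  push_cast
  field_simp
  ring

theorem coeff_Fseries_recurrence (n : ℕ) :
    n ^ 2 * coeff n Fseries + 2 * (n + 1) * (2 * n + 1) * coeff (n + 1) Fseries =
      if n = 0 then 2 else 0 := by
  rcases n with _ | m
  · simp [Fseries]
  · rw [if_neg m.succ_ne_zero]
    push_cast
    linear_combination coeff_Fseries_ratio m

theorem Fseries_ODE :
    PowerSeries.X * (PowerSeries.X + 4) * Fseries.derivativeFun.derivativeFun +
        (PowerSeries.X + 2) * Fseries.derivativeFun - 2 = 0 := by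
  ext n
  rw [map_sub, map_zero, sub_eq_zero, ← map_ofNat C 2, coeff_C]
  exact (coeff_X_mul_X_add_four_mul_derivative_derivative_add Fseries n).trans (coeff_Fseries_recurrence n)
end

section
/- Let n_1, …, n_m be positive integers, let l = n_1 + ⋯ + n_m, and suppose n_j ≥ 2 for some j. Then 2^{l−1} · (n_1!)²⋯(n_m!)² / ((2n_1+1)!⋯(2n_m+1)!) lies in ℤ_(2), i.e. has nonnegative 2-adic valuation. -/
/-!
Legendre's formula gives `v₂((2n+1)!) = v₂((2n)!) = v₂(n!) + n`, so the factor
`(n!)² / (2n+1)!` has 2-adic valuation `v₂(n!) - n`. Summing over `i` and adding `l - 1`, the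
whole expression has valuation `∑ᵢ v₂(nᵢ!) - 1`, which is nonnegative because `2 ∣ n_j!`.
-/

open Nat Finset

theorem padicValRat_prod {p : ℕ} [Fact p.Prime] {ι : Type*} (s : Finset ι) (f : ι → ℚ)
    (hf : ∀ i ∈ s, f i ≠ 0) : padicValRat p (∏ i ∈ s, f i) = ∑ i ∈ s, padicValRat p (f i) := by
  induction s using Finset.cons_induction with
  | empty => simp
  | cons a s ha ih =>
    rw [prod_cons, sum_cons, padicValRat.mul (hf a (mem_cons_self a s))
      (prod_ne_zero_iff.2 fun i hi => hf i (mem_cons_of_mem hi)),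
      ih fun i hi => hf i (mem_cons_of_mem hi)]

theorem padicValNat_two_factorial_two_mul_add_one (n : ℕ) :
    padicValNat 2 (2 * n + 1)! = padicValNat 2 n ! + n := by
  rw [padicValNat_factorial_mul_add n one_lt_two, padicValNat_factorial_mul]

theorem padicValRat_two_factorial_sq_div_factorial_two_mul_add_one (n : ℕ) :
    padicValRat 2 ((n ! : ℚ) ^ 2 / (2 * n + 1)!) = padicValNat 2 n ! - n := by
  rw [padicValRat.div (by positivity) (by positivity), padicValRat.pow, padicValRat.of_nat,
    padicValRat.of_nat, padicValNat_two_factorial_two_mul_add_one]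
  push_cast
  ring

theorem two_pow_mul_prod_mem_int_two_general (m : ℕ) (n : Fin m → ℕ)
    (j : Fin m) (hj : 2 ≤ n j) (l : ℕ) (hl : l = ∑ i, n i) :
    0 ≤ padicValRat 2
        ((2 : ℚ) ^ (l - 1) *
          ((∏ i, ((n i).factorial : ℚ) ^ 2) / ∏ i, ((2 * n i + 1).factorial : ℚ))) := by
  have hnj_le : n j ≤ l := hl ▸ single_le_sum (fun i _ => (n i).zero_le) (mem_univ j)
  have hl_cast : (l : ℤ) = ∑ i, (n i : ℤ) := by exact_mod_cast hl
  have hval_two : padicValRat 2 2 = 1 := by exact_mod_cast padicValRat.self (p := 2) one_lt_two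
  have hval_j : 1 ≤ padicValNat 2 (n j)! :=
    one_le_padicValNat_of_dvd (factorial_ne_zero _) (dvd_factorial two_pos hj)
  have hval_sum : (padicValNat 2 (n j)! : ℤ) ≤ ∑ i, (padicValNat 2 (n i)! : ℤ) :=
    single_le_sum (f := fun i => (padicValNat 2 (n i)! : ℤ)) (fun i _ => by positivity)
      (mem_univ j)
  rw [← prod_div_distrib, padicValRat.mul (by positivity)
      (prod_ne_zero_iff.2 fun i _ => by positivity), padicValRat.pow, hval_two,
    padicValRat_prod _ _ fun i _ => by positivity]
  simp only [padicValRat_two_factorial_sq_div_factorial_two_mul_add_one, sum_sub_distrib]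
  rw [Nat.cast_sub (one_le_two.trans (hj.trans hnj_le)), ← hl_cast]
  omega

theorem two_pow_mul_prod_mem_int_two (m : ℕ) (hm : 1 ≤ m) (n : Fin m → ℕ)
    (hn : ∀ i, 1 ≤ n i) (j : Fin m) (hj : 2 ≤ n j) (l : ℕ) (hl : l = ∑ i, n i) :
    0 ≤ padicValRat 2
        ((2 : ℚ) ^ (l - 1) *
          ((∏ i, ((n i).factorial : ℚ) ^ 2) / ∏ i, ((2 * n i + 1).factorial : ℚ))) :=
  two_pow_mul_prod_mem_int_two_general m n j hj l hl
end

section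
/- Let p be a prime and n ≥ 1 an integer with base-p expansion n = n_r p^r + n_{r-1} p^{r-1} + ⋯ + n_0, where 0 ≤ n_i < p and n_r ≠ 0. Then v_p((2n+1)!) ≤ (2/(p−1))·(n − n_0 − ⋯ − n_r) + r + 1. -/
/-!
By Legendre's formula `v_p(m!) = ∑_{i ≥ 1} ⌊m / p^i⌋`, and `⌊(2n+1)/q⌋ ≤ 2⌊n/q⌋ + 1` for every
`q`. Only the `⌊log_p (2n+1)⌋ ≤ r + 1` nonzero terms contribute, so
`v_p((2n+1)!) ≤ 2 v_p(n!) + r + 1`, and Legendre's digit-sum formula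
`(p - 1) v_p(n!) = n - s_p(n)` turns this into the claim.
-/

open Nat

theorem Nat.two_mul_add_one_div_le (n q : ℕ) : (2 * n + 1) / q ≤ 2 * (n / q) + 1 := by
  rcases q.eq_zero_or_pos with rfl | hq
  · simp
  have hdiv := Nat.div_add_mod n q
  have hmod := Nat.mod_lt n hq
  have : (2 * n + 1) / q < 2 * (n / q) + 2 := by
    rw [Nat.div_lt_iff_lt_mul hq]
    nlinarith
  omega

theorem Nat.log_two_mul_add_one_le (b n : ℕ) : Nat.log b (2 * n + 1) ≤ Nat.log b n + 1 := by
  rcases Nat.lt_or_ge 1 b with hb | hb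
  · refine Nat.lt_succ_iff.mp (Nat.log_lt_of_lt_pow (by omega) ?_)
    calc 2 * n + 1 < 2 * b ^ (Nat.log b n + 1) := by
          have := Nat.lt_pow_succ_log_self hb n
          rw [pow_succ] at this ⊢
          omega
      _ ≤ b ^ (Nat.log b n + 1 + 1) := by
          rw [pow_succ _ (Nat.log b n + 1), mul_comm]
          gcongr
          exact hb
  · simp [Nat.log_of_left_le_one hb]

theorem padicValNat_factorial_two_mul_add_one_le (p : ℕ) [Fact p.Prime] (n : ℕ) :
    padicValNat p (2 * n + 1)! ≤ 2 * padicValNat p n ! + Nat.log p (2 * n + 1) := by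
  set b := Nat.log p (2 * n + 1) + 1
  have hlog_n : Nat.log p n < b := Nat.lt_succ_of_le (Nat.log_mono_right (by omega))
  rw [padicValNat_factorial (Nat.lt_succ_self _), padicValNat_factorial hlog_n]
  calc ∑ i ∈ Finset.Ico 1 b, (2 * n + 1) / p ^ i
      ≤ ∑ i ∈ Finset.Ico 1 b, (2 * (n / p ^ i) + 1) :=
        Finset.sum_le_sum fun i _ => Nat.two_mul_add_one_div_le n (p ^ i)
    _ = 2 * ∑ i ∈ Finset.Ico 1 b, n / p ^ i + Nat.log p (2 * n + 1) := by
        simp [b, Finset.sum_add_distrib, Finset.mul_sum]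

theorem sub_one_mul_padicValNat_factorial_cast (p : ℕ) [hp : Fact p.Prime] (n : ℕ) :
    ((p : ℚ) - 1) * padicValNat p n ! = n - (p.digits n).sum := by
  rw [← Nat.cast_pred hp.out.pos, ← Nat.cast_sub (Nat.digit_sum_le p n), ← Nat.cast_mul,
    sub_one_mul_padicValNat_factorial]

theorem padicValNat_two_mul_add_one_factorial_le_general (p : ℕ) (hp : p.Prime) (n : ℕ) :
    ((padicValNat p (2 * n + 1).factorial : ℚ)) ≤
      2 / ((p : ℚ) - 1) * ((n : ℚ) - ((Nat.digits p n).sum : ℚ)) +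
        ((Nat.log p n : ℚ)) + 1 := by
  have : Fact p.Prime := ⟨hp⟩
  have hp1 : (0 : ℚ) < p - 1 := by
    have : (2 : ℚ) ≤ p := by exact_mod_cast hp.two_le
    linarith
  have hdigits : 2 / ((p : ℚ) - 1) * (n - (p.digits n).sum) = 2 * padicValNat p n ! := by
    rw [← sub_one_mul_padicValNat_factorial_cast p n]
    field_simp
  have hval : padicValNat p (2 * n + 1)! ≤ 2 * padicValNat p n ! + (Nat.log p n + 1) :=
    (padicValNat_factorial_two_mul_add_one_le p n).trans
      (Nat.add_le_add_left (Nat.log_two_mul_add_one_le p n) _)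
  rw [hdigits, add_assoc]
  exact_mod_cast hval

theorem padicValNat_two_mul_add_one_factorial_le (p : ℕ) (hp : p.Prime) (n : ℕ)
    (hn : 1 ≤ n) :
    ((padicValNat p (2 * n + 1).factorial : ℚ)) ≤
      2 / ((p : ℚ) - 1) * ((n : ℚ) - ((Nat.digits p n).sum : ℚ)) +
        ((Nat.log p n : ℚ)) + 1 :=
  padicValNat_two_mul_add_one_factorial_le_general p hp n
end

section
/- Let p be an odd prime and n a positive integer. Then v_p((n!)²/(2n+1)!) ≥ −2n/(p−1), as an inequality of rational numbers, and equality holds if and only if n = (p−1)/2. -/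
/-! By Legendre's formula `(p - 1) v_p(m!) = m - s_p(m)`, with `s_p` the base-`p` digit sum,
`v_p((n!)² / (2n+1)!) + 2n/(p-1) = 2 v_p(n!) + (s_p(2n+1) - 1)/(p-1)`, a sum of two nonnegative
terms. It vanishes iff `n < p` and `s_p(2n+1) = 1`, i.e. `2n+1` is a power of `p` below `p²`,
which forces `2n + 1 = p`. -/

open Nat

namespace Nat

theorem digits_sum_pos (b : ℕ) {m : ℕ} (hm : m ≠ 0) : 0 < (b.digits m).sum :=
  List.sum_pos_iff_exists_pos_nat.mpr ⟨_, List.getLast_mem (digits_ne_nil_iff_ne_zero.mpr hm),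
    pos_of_ne_zero (getLast_digit_ne_zero b hm)⟩

theorem digits_sum_eq_one_iff {b m : ℕ} (hb : 1 < b) :
    (b.digits m).sum = 1 ↔ ∃ k, m = b ^ k := by
  refine ⟨fun h => ?_, ?_⟩
  · induction m using Nat.strong_induction_on with
    | _ m ih =>
      have hm : m ≠ 0 := by rintro rfl; simp at h
      rw [digits_def' hb (pos_of_ne_zero hm), List.sum_cons] at h
      have hdiv := div_add_mod m b
      by_cases hq : m / b = 0
      · exact ⟨0, by simp_all⟩
      · have hpos := digits_sum_pos b hq
        obtain ⟨k, hk⟩ := ih (m / b) (div_lt_self (pos_of_ne_zero hm) hb) (by omega)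
        refine ⟨k + 1, ?_⟩
        rw [pow_succ, ← hk, mul_comm]
        omega
  · rintro ⟨k, rfl⟩
    have h := digits_base_pow_mul hb one_pos (k := k)
    rw [mul_one, digits_of_lt b 1 one_ne_zero hb] at h
    simp [h]

theorem lt_and_digits_sum_two_mul_add_one_eq_one_iff {b n : ℕ} (hb : 1 < b) (hn : n ≠ 0) :
    n < b ∧ (b.digits (2 * n + 1)).sum = 1 ↔ 2 * n + 1 = b := by
  rw [digits_sum_eq_one_iff hb]
  refine ⟨?_, fun h => ⟨by omega, 1, by rw [h, pow_one]⟩⟩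
  rintro ⟨hnb, k, hk⟩
  match k with
  | 0 => simp at hk; omega
  | 1 => rwa [pow_one] at hk
  | k + 2 =>
    have : b ^ 2 ≤ b ^ (k + 2) := Nat.pow_le_pow_right (by omega) (by omega)
    nlinarith

end Nat

theorem padicValNat_factorial_eq_div (p : ℕ) [hp : Fact p.Prime] (m : ℕ) :
    (padicValNat p m ! : ℚ) = (m - (p.digits m).sum) / (p - 1) := by
  have hp1 : (p : ℚ) - 1 ≠ 0 := sub_ne_zero.mpr (by exact_mod_cast hp.out.one_lt.ne')
  rw [eq_div_iff hp1, mul_comm]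
  have h := congrArg (Nat.cast : ℕ → ℚ) (sub_one_mul_padicValNat_factorial (p := p) m)
  rwa [Nat.cast_mul, Nat.cast_sub (digit_sum_le p m), Nat.cast_sub hp.out.one_le, Nat.cast_one] at h

theorem padicValRat_factorial_sq_div_add_eq (p : ℕ) [hp : Fact p.Prime] (n : ℕ) :
    (padicValRat p ((n ! : ℚ) ^ 2 / (2 * n + 1)!) : ℚ) + 2 * n / (p - 1) =
      2 * padicValNat p n ! + ((p.digits (2 * n + 1)).sum - 1) / (p - 1) := by
  have hp1 : (p : ℚ) - 1 ≠ 0 := sub_ne_zero.mpr (by exact_mod_cast hp.out.one_lt.ne')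
  rw [padicValRat.div (by positivity) (by positivity), padicValRat.pow,
    padicValRat.of_nat, padicValRat.of_nat]
  simp only [Int.cast_sub, Int.cast_mul, Int.cast_natCast]
  rw [padicValNat_factorial_eq_div p (2 * n + 1)]
  push_cast
  field_simp
  ring

theorem padicValRat_factorial_sq_div_ge_general (p : ℕ) (hp : p.Prime) (n : ℕ)
    (hn : 1 ≤ n) :
    -(2 * (n : ℚ) / ((p : ℚ) - 1)) ≤
        ((padicValRat p (((n.factorial : ℚ)) ^ 2 / ((2 * n + 1).factorial : ℚ)) : ℚ)) ∧
      (((padicValRat p (((n.factorial : ℚ)) ^ 2 / ((2 * n + 1).factorial : ℚ)) : ℚ)) =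
          -(2 * (n : ℚ) / ((p : ℚ) - 1)) ↔ n = (p - 1) / 2) := by
  have := Fact.mk hp
  have hp1 : (0 : ℚ) < p - 1 := sub_pos.mpr (by exact_mod_cast hp.one_lt)
  have hdigits : (1 : ℚ) ≤ (p.digits (2 * n + 1)).sum := by
    exact_mod_cast Nat.digits_sum_pos p (Nat.succ_ne_zero (2 * n))
  have hexcess : 0 ≤ ((p.digits (2 * n + 1)).sum - 1 : ℚ) / (p - 1) :=
    div_nonneg (sub_nonneg.mpr hdigits) hp1.le
  rw [neg_le_iff_add_nonneg, eq_neg_iff_add_eq_zero, padicValRat_factorial_sq_div_add_eq,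
    add_eq_zero_iff_of_nonneg (by positivity) hexcess]
  refine ⟨by positivity, ?_⟩
  rw [div_eq_zero_iff, or_iff_left hp1.ne', sub_eq_zero, _root_.mul_eq_zero,
    or_iff_right two_ne_zero]
  norm_cast
  rw [padicValNat.eq_zero_iff, hp.dvd_factorial]
  simp only [hp.ne_one, factorial_ne_zero, false_or, not_le]
  rw [Nat.lt_and_digits_sum_two_mul_add_one_eq_one_iff hp.one_lt (by omega)]
  -- `p = 2` is excluded on both sides since `n ≠ 0 = (2 - 1) / 2`.
  rcases hp.eq_two_or_odd with rfl | hodd <;> omega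

theorem padicValRat_factorial_sq_div_ge (p : ℕ) (hp : p.Prime) (hodd : p ≠ 2) (n : ℕ)
    (hn : 1 ≤ n) :
    -(2 * (n : ℚ) / ((p : ℚ) - 1)) ≤
        ((padicValRat p (((n.factorial : ℚ)) ^ 2 / ((2 * n + 1).factorial : ℚ)) : ℚ)) ∧
      (((padicValRat p (((n.factorial : ℚ)) ^ 2 / ((2 * n + 1).factorial : ℚ)) : ℚ)) =
          -(2 * (n : ℚ) / ((p : ℚ) - 1)) ↔ n = (p - 1) / 2) :=
  padicValRat_factorial_sq_div_ge_general p hp n hn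
end

section
/- Let p be an odd prime and let n ≥ 1 and l ≥ 0 be integers with l < n(p−1)/2. Then either ε_l = 0 or v_p(ε_l) > −n; equivalently, p^{n−1}·ε_l ∈ ℤ_(p). -/
/-!
Isolating the term `i = l` of the defining identity (its only composition is `(1, …, 1)`) gives
`ε l = 1/(2l+1)! - ∑_{i<l} ∑_c 2^i ε_i / ∏ (2c_t)!`, and one shows by strong induction that
`|ε l|_p ≤ p ^ ⌊2l/(p-1)⌋`. By Legendre's formula `(p-1) v_p(m!) = m - s_p(m)`, and for odd `p`
the digit sum `s_p(2j)` is even and positive, so `(p-1) v_p((2j)!) ≤ 2j - 2`. Summed over a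
composition `c` of `l` into `i` parts, the denominator costs at most `p ^ K` with
`(p-1) K + 2i ≤ 2l`, which is exactly what the induction hypothesis for `ε i` leaves room for.
-/

open Finset

/-- The defining property of the sequence `ε`: `ε 0 = 1` and for each `l ≥ 1`,
`1/(2l+1)! = ∑_{i=1}^{l} ∑_{j₁+⋯+jᵢ=l, jₜ ≥ 1} 2^i εᵢ / ((2j₁)!⋯(2jᵢ)!)`,
the inner sum ranging over ordered `i`-tuples of positive integers summing to `l`. -/
def IsEpsilon (ε : ℕ → ℚ) : Prop :=
  ε 0 = 1 ∧ ∀ l : ℕ, 1 ≤ l →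
    (1 : ℚ) / ((2 * l + 1).factorial : ℚ) =
      ∑ i ∈ Finset.Icc 1 l,
        ∑ c ∈ (Fintype.piFinset fun _ : Fin i => Finset.Icc 1 l).filter
            (fun c => ∑ t, c t = l),
          2 ^ i * ε i / ∏ t, ((2 * c t).factorial : ℚ)

open Nat

variable {p : ℕ} [Fact p.Prime]

theorem sub_one_mul_padicValNat_factorial_add_two_le (hp : Odd p) {m : ℕ} (hm : Even m)
    (hm0 : m ≠ 0) : (p - 1) * padicValNat p m ! + 2 ≤ m := by
  have hlegendre := sub_one_mul_padicValNat_factorial (p := p) m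
  have hlt := sub_one_mul_padicValNat_factorial_lt_of_ne_zero p hm0
  have hle := digit_sum_le p m
  -- `p ≡ 1 [MOD 2]`, so the digit sum is even like `m`, and it is positive
  have hparity := modEq_digits_sum 2 p (odd_iff.mp hp) m
  rw [ModEq, even_iff.mp hm] at hparity
  omega

theorem padicNorm_inv_natCast {m : ℕ} (hm : m ≠ 0) :
    padicNorm p (m : ℚ)⁻¹ = (p : ℚ) ^ padicValNat p m := by
  rw [padicNorm.eq_zpow_of_nonzero (by positivity), padicValRat.inv, padicValRat.of_nat, neg_neg,
    zpow_natCast]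

theorem padicNorm_two_pow (hp : Odd p) (i : ℕ) : padicNorm p (2 ^ i) = 1 := by
  have hndvd : ¬p ∣ 2 ^ i := fun h => by
    obtain rfl := (prime_dvd_prime_iff_eq Fact.out prime_two).mp
      ((Fact.out : p.Prime).dvd_of_dvd_pow h)
    exact absurd hp (by decide)
  exact_mod_cast (padicNorm.nat_eq_one_iff (2 ^ i)).mpr hndvd

theorem padicNorm_inv_prod_factorial (i : ℕ) (m : Fin i → ℕ) :
    padicNorm p (∏ t, ((m t)! : ℚ))⁻¹ = (p : ℚ) ^ ∑ t, padicValNat p (m t)! := by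
  rw [← prod_inv_distrib, ← prod_pow_eq_pow_sum]
  simp_rw [← padicNorm_inv_natCast (factorial_ne_zero _)]
  exact map_prod (IsAbsoluteValue.toAbsoluteValue (padicNorm p)) _ _

theorem padicNorm_two_pow_mul_div_prod_factorial_le (hp : Odd p) {i l : ℕ} {c : Fin i → ℕ}
    (hc : ∀ t, 1 ≤ c t) (hsum : ∑ t, c t = l) {x : ℚ}
    (hx : padicNorm p x ≤ (p : ℚ) ^ (2 * i / (p - 1))) :
    padicNorm p (2 ^ i * x / ∏ t, ((2 * c t)! : ℚ)) ≤ (p : ℚ) ^ (2 * l / (p - 1)) := by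
  set K := ∑ t, padicValNat p (2 * c t)!
  have hK : (p - 1) * K + 2 * i ≤ 2 * l := by
    calc (p - 1) * K + 2 * i = ∑ t, ((p - 1) * padicValNat p (2 * c t)! + 2) := by
          simp [K, sum_add_distrib, mul_sum, mul_comm]
      _ ≤ ∑ t, 2 * c t := sum_le_sum fun t _ =>
          sub_one_mul_padicValNat_factorial_add_two_le hp (even_two_mul _) (by grind)
      _ = 2 * l := by rw [← mul_sum, hsum]
  have hexp : 2 * i / (p - 1) + K ≤ 2 * l / (p - 1) := by
    rw [← add_mul_div_left _ _ (Nat.sub_pos_of_lt (Fact.out : p.Prime).one_lt)]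
    exact Nat.div_le_div_right (by linarith)
  have hp1 : (1 : ℚ) ≤ p := by exact_mod_cast (Fact.out : p.Prime).one_le
  calc padicNorm p (2 ^ i * x / ∏ t, ((2 * c t)! : ℚ))
      = padicNorm p x * (p : ℚ) ^ K := by
        rw [div_eq_mul_inv, padicNorm.mul, padicNorm.mul, padicNorm_two_pow hp, one_mul,
          padicNorm_inv_prod_factorial]
    _ ≤ (p : ℚ) ^ (2 * i / (p - 1)) * (p : ℚ) ^ K := by gcongr
    _ ≤ (p : ℚ) ^ (2 * l / (p - 1)) := by rw [← pow_add]; exact pow_le_pow_right₀ hp1 hexp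

def compositions (i l : ℕ) : Finset (Fin i → ℕ) :=
  (Fintype.piFinset fun _ => Icc 1 l).filter fun c => ∑ t, c t = l

theorem mem_compositions {i l : ℕ} {c : Fin i → ℕ} :
    c ∈ compositions i l ↔ (∀ t, c t ∈ Icc 1 l) ∧ ∑ t, c t = l := by
  simp [compositions]

theorem compositions_self (l : ℕ) : compositions l l = {fun _ => 1} := by
  ext c
  rw [mem_compositions, mem_singleton]
  constructor
  · rintro ⟨hc, hsum⟩
    funext t
    refine ((sum_eq_sum_iff_of_le fun t _ => (mem_Icc.mp (hc t)).1).mp ?_ t (mem_univ t)).symm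
    simpa using hsum.symm
  · rintro rfl
    exact ⟨fun t => mem_Icc.mpr ⟨le_rfl, t.pos⟩, by simp⟩

variable {ε : ℕ → ℚ}

theorem IsEpsilon.eq_sub (hε : IsEpsilon ε) {l : ℕ} (hl : 1 ≤ l) :
    ε l = 1 / (2 * l + 1)! -
      ∑ i ∈ Ico 1 l, ∑ c ∈ compositions i l, 2 ^ i * ε i / ∏ t, ((2 * c t)! : ℚ) := by
  have hrec : (1 / (2 * l + 1)! : ℚ) = ∑ i ∈ Icc 1 l, ∑ c ∈ compositions i l, _ := hε.2 l hl
  rw [← Ico_add_one_right_eq_Icc, sum_Ico_succ_top hl, compositions_self] at hrec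
  simp only [sum_singleton, prod_const, Finset.card_fin, mul_one, factorial_two, cast_ofNat] at hrec
  rw [mul_div_cancel_left₀ _ (by positivity)] at hrec
  linarith

theorem IsEpsilon.padicNorm_le (hε : IsEpsilon ε) (hp : Odd p) (l : ℕ) :
    padicNorm p (ε l) ≤ (p : ℚ) ^ (2 * l / (p - 1)) := by
  induction l using Nat.strong_induction_on with
  | _ l ih =>
  rcases Nat.eq_zero_or_pos l with rfl | hl
  · simp [hε.1]
  have hp1 : (1 : ℚ) ≤ p := by exact_mod_cast (Fact.out : p.Prime).one_le
  have hfactorial : padicNorm p (1 / (2 * l + 1)! : ℚ) ≤ (p : ℚ) ^ (2 * l / (p - 1)) := by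
    rw [one_div, padicNorm_inv_natCast (factorial_ne_zero _)]
    refine pow_le_pow_right₀ hp1
      ((le_div_iff_mul_le (Nat.sub_pos_of_lt (Fact.out : p.Prime).one_lt)).mpr ?_)
    have := sub_one_mul_padicValNat_factorial_lt_of_ne_zero p (succ_ne_zero (2 * l))
    linarith
  have hcorrection : padicNorm p
      (∑ i ∈ Ico 1 l, ∑ c ∈ compositions i l, 2 ^ i * ε i / ∏ t, ((2 * c t)! : ℚ)) ≤
      (p : ℚ) ^ (2 * l / (p - 1)) := by
    refine padicNorm.sum_le' (fun i hi => ?_) (by positivity)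
    refine padicNorm.sum_le' (fun c hc => ?_) (by positivity)
    obtain ⟨hc, hsum⟩ := mem_compositions.mp hc
    exact padicNorm_two_pow_mul_div_prod_factorial_le hp (fun t => (mem_Icc.mp (hc t)).1) hsum
      (ih i (mem_Ico.mp hi).2)
  rw [hε.eq_sub hl]
  exact padicNorm.sub.trans (max_le hfactorial hcorrection)

theorem padicValRat_epsilon_gt_of_lt_general (ε : ℕ → ℚ) (hε : IsEpsilon ε) (p : ℕ)
    (hp : p.Prime) (hodd : p ≠ 2) (n l : ℕ) (hl : 2 * l < n * (p - 1)) :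
    ε l = 0 ∨ -(n : ℤ) < padicValRat p (ε l) := by
  have : Fact p.Prime := ⟨hp⟩
  refine or_iff_not_imp_left.mpr fun hε0 => ?_
  have hbound := hε.padicNorm_le (hp.odd_of_ne_two hodd) l
  rw [padicNorm.eq_zpow_of_nonzero hε0, ← zpow_natCast,
    zpow_le_zpow_iff_right₀ (by exact_mod_cast hp.one_lt)] at hbound
  have := (Nat.div_lt_iff_lt_mul (Nat.sub_pos_of_lt hp.one_lt)).mpr hl
  omega

theorem padicValRat_epsilon_gt_of_lt (ε : ℕ → ℚ) (hε : IsEpsilon ε) (p : ℕ)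
    (hp : p.Prime) (hodd : p ≠ 2) (n l : ℕ) (hn : 1 ≤ n) (hl : 2 * l < n * (p - 1)) :
    ε l = 0 ∨ -(n : ℤ) < padicValRat p (ε l) :=
  padicValRat_epsilon_gt_of_lt_general ε hε p hp hodd n l hl
end
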